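/- arXiv:1509.08421 — 4 statements merged into one kernel-verified Lean document; each statement's English description precedes it below -/
import Mathlib

section
/- The hypergeometric series A(z) = Σ_{i≥0} (6i)!/((3i)!(2i)!) (−z)^i/1728^i and B(z) = Σ_{i≥0} (6i)!/((3i)!(2i)!) · (1+6i)/(1−6i) · (−z)^i/1728^i satisfy the identity A^e(z)B^e(z) − A^o(z)B^o(z) = 1 as formal power series, where f^e and f^o denote even and odd parts. -/
/-- The Faber–Zagier series `A(z) = Σ (6i)!/((3i)!(2i)!) (−z)^i/1728^i`. -/
noncomputable def FZA : PowerSeries ℚ :=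
  PowerSeries.mk fun i =>
    ((6 * i).factorial : ℚ) / ((3 * i).factorial * (2 * i).factorial) * (-1) ^ i / 1728 ^ i

/-- The Faber–Zagier series
`B(z) = Σ (6i)!/((3i)!(2i)!) · (1+6i)/(1−6i) · (−z)^i/1728^i`. -/
noncomputable def FZB : PowerSeries ℚ :=
  PowerSeries.mk fun i =>
    ((6 * i).factorial : ℚ) / ((3 * i).factorial * (2 * i).factorial)
      * ((1 + 6 * (i : ℚ)) / (1 - 6 * (i : ℚ))) * (-1) ^ i / 1728 ^ i

/-- The even part of a power series. -/
noncomputable def evenPart (f : PowerSeries ℚ) : PowerSeries ℚ :=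
  PowerSeries.mk fun n => if Even n then PowerSeries.coeff n f else 0

/-- The odd part of a power series. -/
noncomputable def oddPart (f : PowerSeries ℚ) : PowerSeries ℚ :=
  PowerSeries.mk fun n => if Even n then 0 else PowerSeries.coeff n f

/-!
For even `n`, the `n`-th coefficient of `Aᵉ Bᵉ - Aᵒ Bᵒ` is `∑_{i+j=n} (-1)^i a_i b_j` (and it
vanishes for odd `n`). With `a_i = c_i x^i`, `b_j = c_j r_j x^j`, `r_j = (1+6j)/(1-6j)` and
`x = -1/1728`, symmetrising in `i ↔ j` replaces `r_j` by `(r_i + r_j)/2`, and the summand becomes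
`u(i,j) = (-1)^i g_i g_j (1 - 36ij)` with `g_i = c_i/(1-6i)`. The recurrence
`(i+1) g_{i+1} = -12 (6i+1)(1-6i) g_i` gives the WZ-style relation
`(i+j+1) u(i,j+1) = w(i+1,j) - w(i,j+1)` for `w(i,j) = (-1)^i g_i g_j i (36j² - 1)`, so
`n ∑_{i+j=n} u(i,j)` telescopes to `-w(0,n) = 0`.
-/

open Finset PowerSeries

lemma ite_even_mul_sub_ite_odd_mul {R : Type*} [CommRing R] (i j : ℕ) (a b : R) :
    (if Even i then a else 0) * (if Even j then b else 0)
      - (if Even i then 0 else a) * (if Even j then 0 else b)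
      = if Even (i + j) then (-1) ^ i * a * b else 0 := by
  by_cases hi : Even i <;> by_cases hj : Even j <;> simp [hi, hj, Nat.even_add, neg_one_pow_eq_ite]

lemma coeff_evenPart_mul_sub_oddPart_mul (f g : PowerSeries ℚ) (n : ℕ) :
    coeff n (evenPart f * evenPart g - oddPart f * oddPart g)
      = if Even n then ∑ p ∈ antidiagonal n, (-1) ^ p.1 * coeff p.1 f * coeff p.2 g else 0 := by
  rw [map_sub, coeff_mul, coeff_mul, ← sum_sub_distrib, ite_sum_zero]
  refine sum_congr rfl fun p hp => ?_
  simp only [evenPart, oddPart, coeff_mk, ite_even_mul_sub_ite_odd_mul, mem_antidiagonal.1 hp]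

namespace FaberZagier

noncomputable def coef (i : ℕ) : ℚ := (6 * i).factorial / ((3 * i).factorial * (2 * i).factorial)

noncomputable def ratio (i : ℕ) : ℚ := (1 + 6 * i) / (1 - 6 * i)

lemma coeff_FZA (i : ℕ) : coeff i FZA = coef i * (-1 / 1728) ^ i := by
  rw [FZA, coeff_mk, coef, div_pow]
  ring

lemma coeff_FZB (i : ℕ) : coeff i FZB = coef i * ratio i * (-1 / 1728) ^ i := by
  rw [FZB, coeff_mk, coef, ratio, div_pow]
  ring

lemma one_sub_six_mul_ne_zero (i : ℕ) : (1 - 6 * i : ℚ) ≠ 0 := by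
  intro h
  have : 6 * i = 1 := by exact_mod_cast (by linarith : (6 * i : ℚ) = 1)
  omega

lemma succ_mul_coef_succ (i : ℕ) :
    (i + 1 : ℚ) * coef (i + 1) = 12 * (6 * i + 1) * (6 * i + 5) * coef i := by
  have h6 : 6 * (i + 1) = 6 * i + 1 + 1 + 1 + 1 + 1 + 1 := by ring
  have h3 : 3 * (i + 1) = 3 * i + 1 + 1 + 1 := by ring
  have h2 : 2 * (i + 1) = 2 * i + 1 + 1 := by ring
  simp only [coef, h6, h3, h2, Nat.factorial_succ]
  push_cast
  field_simp
  ring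

noncomputable def reducedCoef (i : ℕ) : ℚ := coef i / (1 - 6 * i)

lemma reducedCoef_succ (i : ℕ) :
    reducedCoef (i + 1) = -12 * (6 * i + 1) * (1 - 6 * i) * reducedCoef i / (i + 1) := by
  have h := succ_mul_coef_succ i
  have h0 := one_sub_six_mul_ne_zero i
  have h1 := one_sub_six_mul_ne_zero (i + 1)
  push_cast at h1
  simp only [reducedCoef, Nat.cast_add, Nat.cast_one]
  field_simp
  linear_combination h

noncomputable def pairTerm (i j : ℕ) : ℚ :=
  (-1) ^ i * reducedCoef i * reducedCoef j * (1 - 36 * i * j)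

noncomputable def certificate (i j : ℕ) : ℚ :=
  (-1) ^ i * reducedCoef i * reducedCoef j * i * (36 * j ^ 2 - 1)

lemma add_add_one_mul_pairTerm (i j : ℕ) :
    (i + j + 1 : ℚ) * pairTerm i (j + 1) = certificate (i + 1) j - certificate i (j + 1) := by
  simp only [pairTerm, certificate, reducedCoef_succ, Nat.cast_add, Nat.cast_one]
  field_simp
  ring

lemma sum_antidiagonal_pairTerm (n : ℕ) : ∑ p ∈ antidiagonal (n + 1), pairTerm p.1 p.2 = 0 := by
  have h : ((n + 1 : ℕ) : ℚ) * ∑ p ∈ antidiagonal (n + 1), pairTerm p.1 p.2 = 0 := by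
    calc _ = ∑ p ∈ antidiagonal (n + 1), ((p.1 + p.2 : ℕ) : ℚ) * pairTerm p.1 p.2 := by
          rw [mul_sum]
          exact sum_congr rfl fun p hp => by rw [mem_antidiagonal.1 hp]
      _ = ((n + 1 : ℕ) : ℚ) * pairTerm (n + 1) 0
            + ∑ p ∈ antidiagonal n, (certificate (p.1 + 1) p.2 - certificate p.1 (p.2 + 1)) := by
          rw [Nat.sum_antidiagonal_succ']
          congr 1
          refine sum_congr rfl fun p _ => ?_
          rw [← add_add_one_mul_pairTerm]
          push_cast
          ring
      _ = -certificate 0 (n + 1) := by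
          have hfirst := Nat.sum_antidiagonal_succ (n := n) (f := fun p => certificate p.1 p.2)
          have hlast := Nat.sum_antidiagonal_succ' (n := n) (f := fun p => certificate p.1 p.2)
          have hcorner : ((n + 1 : ℕ) : ℚ) * pairTerm (n + 1) 0 + certificate (n + 1) 0 = 0 := by
            simp only [pairTerm, certificate]
            push_cast
            ring
          rw [sum_sub_distrib]
          linear_combination hlast - hfirst + hcorner
      _ = 0 := by simp [certificate]
  exact (mul_eq_zero.1 h).resolve_left (by positivity)

lemma coef_mul_ratio_add_coef_mul_ratio (i j : ℕ) :
    coef i * (coef j * ratio j) + coef j * (coef i * ratio i)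
      = 2 * (reducedCoef i * reducedCoef j * (1 - 36 * i * j)) := by
  have hi := one_sub_six_mul_ne_zero i
  have hj := one_sub_six_mul_ne_zero j
  simp only [ratio, reducedCoef]
  field_simp
  ring

lemma sum_antidiagonal_neg_one_pow_mul_coef_mul_ratio {n : ℕ} (hn : Even n) (hn0 : n ≠ 0) :
    ∑ p ∈ antidiagonal n, (-1) ^ p.1 * coef p.1 * (coef p.2 * ratio p.2) = 0 := by
  obtain ⟨m, rfl⟩ := Nat.exists_eq_add_one_of_ne_zero hn0
  have hsymm : 2 * ∑ p ∈ antidiagonal (m + 1), (-1) ^ p.1 * coef p.1 * (coef p.2 * ratio p.2)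
      = 2 * ∑ p ∈ antidiagonal (m + 1), pairTerm p.1 p.2 := by
    rw [two_mul]
    nth_rewrite 2 [← Nat.sum_antidiagonal_swap]
    rw [← sum_add_distrib, mul_sum]
    refine sum_congr rfl fun p hp => ?_
    have hsign : (-1 : ℚ) ^ p.2 = (-1) ^ p.1 :=
      neg_one_pow_congr (by rw [← mem_antidiagonal.1 hp, Nat.even_add] at hn; exact hn.symm)
    simp only [Prod.fst_swap, Prod.snd_swap, hsign, pairTerm]
    linear_combination (-1 : ℚ) ^ p.1 * coef_mul_ratio_add_coef_mul_ratio p.1 p.2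
  simpa [sum_antidiagonal_pairTerm] using hsymm

lemma sum_antidiagonal_neg_one_pow_mul_coeff_FZA_mul_coeff_FZB (n : ℕ) :
    ∑ p ∈ antidiagonal n, (-1) ^ p.1 * coeff p.1 FZA * coeff p.2 FZB
      = (-1 / 1728) ^ n * ∑ p ∈ antidiagonal n, (-1) ^ p.1 * coef p.1 * (coef p.2 * ratio p.2) := by
  rw [mul_sum]
  refine sum_congr rfl fun p hp => ?_
  rw [coeff_FZA, coeff_FZB, ← mem_antidiagonal.1 hp, pow_add]
  ring

end FaberZagier

open FaberZagier in
/-- The Faber–Zagier series satisfy `A^e B^e − A^o B^o = 1`. -/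
theorem FZ_even_odd_identity :
    evenPart FZA * evenPart FZB - oddPart FZA * oddPart FZB = 1 := by
  ext n
  rw [coeff_evenPart_mul_sub_oddPart_mul, coeff_one,
    sum_antidiagonal_neg_one_pow_mul_coeff_FZA_mul_coeff_FZB]
  rcases eq_or_ne n 0 with rfl | hn0
  · simp [coef, ratio]
  · rw [if_neg hn0]
    split_ifs with hn
    · rw [sum_antidiagonal_neg_one_pow_mul_coef_mul_ratio hn hn0, mul_zero]
    · rfl
end

section
/- The Faber–Zagier series satisfy A(z)·B(−z) + A(−z)·B(z) = 2 as formal power series in Q[[z]]. -/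
/-!
The series `A` and `B` solve the linear system `z²A' = 2(B - A) - zA/6`, `z²B' = 2(A - B) + zB/6`;
coefficientwise this is the ratio recurrence of `(6i)!/((3i)!(2i)!)`. Substituting `-z` turns a
solution into a solution of the same system with the coupling constant `2` negated, and for two
solutions `(f, g)`, `(f₁, g₁)` with opposite coupling constants the pairing `f g₁ + f₁ g` has
zero derivative: the coupling terms cancel because the system is symmetric, the `±z/6` terms
because they have opposite signs in the two equations. So `A(z)B(-z) + A(-z)B(z)` is the constant
`2 A(0) B(0) = 2`.
-/

open PowerSeries

section

variable {R : Type*} [CommSemiring R]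

theorem PowerSeries.derivative_rescale (c : R) (f : R⟦X⟧) :
    d⁄dX R (rescale c f) = c • rescale c (d⁄dX R f) := by
  ext n
  simp only [coeff_derivative, coeff_rescale, coeff_smul, smul_eq_mul, pow_succ]
  ring

theorem PowerSeries.constantCoeff_rescale (c : R) (f : R⟦X⟧) :
    constantCoeff (rescale c f) = constantCoeff f := by
  rw [← coeff_zero_eq_constantCoeff_apply, coeff_rescale, pow_zero, one_mul,
    coeff_zero_eq_constantCoeff_apply]

theorem PowerSeries.rescale_smul (c a : R) (f : R⟦X⟧) :
    rescale c (a • f) = a • rescale c f := by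
  ext n
  simp only [coeff_rescale, coeff_smul, smul_eq_mul]
  ring

theorem PowerSeries.coeff_succ_X_sq_mul_derivative (f : R⟦X⟧) (n : ℕ) :
    coeff (n + 1) (X ^ 2 * d⁄dX R f) = n * coeff n f := by
  rcases n with _ | n
  · simp [coeff_X_pow_mul']
  · rw [show n + 1 + 1 = n + 2 from rfl, coeff_X_pow_mul, coeff_derivative]
    push_cast
    ring

end

section

variable {R : Type*} [CommRing R]

structure IsFaberZagierPair (a b : R) (f g : R⟦X⟧) : Prop where
  derivative_fst : X ^ 2 * d⁄dX R f = a • (g - f) - b • (X * f)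
  derivative_snd : X ^ 2 * d⁄dX R g = a • (f - g) + b • (X * g)

namespace IsFaberZagierPair

variable {a b : R} {f g f₁ g₁ : R⟦X⟧}

theorem rescale_neg_one (h : IsFaberZagierPair a b f g) :
    IsFaberZagierPair (-a) b (rescale (-1) f) (rescale (-1) g) := by
  have key (φ : R⟦X⟧) :
      X ^ 2 * d⁄dX R (rescale (-1) φ) = -rescale (-1) (X ^ 2 * d⁄dX R φ) := by
    rw [derivative_rescale, map_mul, map_pow, rescale_neg_one_X, neg_one_smul]
    ring
  constructor
  · rw [key, h.derivative_fst]
    simp only [map_sub, map_mul, rescale_smul, rescale_neg_one_X, neg_mul]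
    module
  · rw [key, h.derivative_snd]
    simp only [map_sub, map_add, map_mul, rescale_smul, rescale_neg_one_X, neg_mul]
    module

theorem derivative_mul_add_mul_eq_zero (h : IsFaberZagierPair a b f g)
    (h₁ : IsFaberZagierPair (-a) b f₁ g₁) : d⁄dX R (f * g₁ + f₁ * g) = 0 := by
  apply X_pow_mul_injective (k := 2)
  have hf := h.derivative_fst
  have hg := h.derivative_snd
  have hf₁ := h₁.derivative_fst
  have hg₁ := h₁.derivative_snd
  simp only [smul_eq_C_mul, map_neg] at hf hg hf₁ hg₁
  simp only [map_add, Derivation.leibniz, smul_eq_mul, mul_zero]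
  linear_combination f * hg₁ + g₁ * hf + f₁ * hg + g * hf₁

theorem mul_rescale_add_rescale_mul [IsAddTorsionFree R] (h : IsFaberZagierPair a b f g) :
    f * rescale (-1) g + rescale (-1) f * g = C (2 * constantCoeff f * constantCoeff g) := by
  apply derivative.ext
  · rw [h.derivative_mul_add_mul_eq_zero h.rescale_neg_one, derivative_C]
  · simp only [map_add, map_mul, constantCoeff_rescale, constantCoeff_C]
    ring

end IsFaberZagierPair

end

theorem coeff_FZA_succ (m : ℕ) :
    coeff (m + 1) FZA = -((6 * m + 1) * (6 * m + 5)) / (144 * (m + 1)) * coeff m FZA := by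
  have h6 : 6 * (m + 1) = 6 * m + 1 + 1 + 1 + 1 + 1 + 1 := by ring
  have h3 : 3 * (m + 1) = 3 * m + 1 + 1 + 1 := by ring
  have h2 : 2 * (m + 1) = 2 * m + 1 + 1 := by ring
  simp only [FZA, coeff_mk, h6, h3, h2, Nat.factorial_succ, pow_succ]
  push_cast
  field_simp
  ring

theorem coeff_FZB (m : ℕ) : coeff m FZB = (1 + 6 * m) / (1 - 6 * m) * coeff m FZA := by
  simp only [FZA, FZB, coeff_mk]
  ring

theorem one_sub_six_mul_natCast_ne_zero (m : ℕ) : (1 : ℚ) - 6 * m ≠ 0 :=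
  sub_ne_zero.mpr (by exact_mod_cast (by omega : 1 ≠ 6 * m))

theorem coeff_FZB_succ_sub_coeff_FZA_succ (m : ℕ) :
    12 * (coeff (m + 1) FZB - coeff (m + 1) FZA) = (6 * m + 1) * coeff m FZA := by
  have h := one_sub_six_mul_natCast_ne_zero (m + 1)
  push_cast at h
  rw [coeff_FZB, coeff_FZA_succ]
  push_cast
  field_simp
  ring

theorem coeff_FZA_succ_sub_coeff_FZB_succ (m : ℕ) :
    12 * (coeff (m + 1) FZA - coeff (m + 1) FZB) = (6 * m - 1) * coeff m FZB := by
  have h := one_sub_six_mul_natCast_ne_zero (m + 1)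
  have h' := one_sub_six_mul_natCast_ne_zero m
  push_cast at h
  rw [coeff_FZB, coeff_FZB, coeff_FZA_succ]
  push_cast
  field_simp
  ring

theorem isFaberZagierPair_FZA_FZB : IsFaberZagierPair (2 : ℚ) 6⁻¹ FZA FZB := by
  constructor <;> ext (_ | n)
  · simp [FZA, FZB]
  · rw [coeff_succ_X_sq_mul_derivative]
    simp only [map_sub, coeff_smul, coeff_succ_X_mul, smul_eq_mul]
    linear_combination (-1 / 6 : ℚ) * coeff_FZB_succ_sub_coeff_FZA_succ n
  · simp [FZA, FZB]
  · rw [coeff_succ_X_sq_mul_derivative]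
    simp only [map_sub, map_add, coeff_smul, coeff_succ_X_mul, smul_eq_mul]
    linear_combination (-1 / 6 : ℚ) * coeff_FZA_succ_sub_coeff_FZB_succ n

/-- The Faber–Zagier series satisfy `A(z)·B(−z) + A(−z)·B(z) = 2` in `ℚ[[z]]`. -/
theorem FZ_symplectic_identity :
    FZA * PowerSeries.rescale (-1) FZB + PowerSeries.rescale (-1) FZA * FZB = 2 := by
  rw [isFaberZagierPair_FZA_FZB.mul_rescale_add_rescale_mul]
  simp [FZA, FZB, map_ofNat]
end

section
/- Let ω_{g,n} be the multilinear form on V = Q[√φ]⟨1, H̃⟩ defined on the basis by ω_{g,n}(1^{⊗a}, H̃^{⊗b}) = 2^g φ^{(g−1+b)/2} if g−1+b is even and 0 otherwise (a+b = n). Then ω satisfies the genus-reduction gluing identity: for g ≥ 1, Σ_{μ,ν} ω_{g−1,n+2}(v_1,…,v_n, e_μ, e_ν) η^{μν} = ω_{g,n}(v_1,…,v_n), where {e_μ} = {1, H̃} and η^{μν} is the inverse Gram matrix [[0,1],[1,0]] (so the inserted bivector is 1⊗H̃ + H̃⊗1). -/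
/-! Both terms of the bivector `1 ⊗ H̃ + H̃ ⊗ 1` add one `H̃`. Apart from the factor `2^g`, the
value `ω_{g,n}` depends only on `g + b`, so one extra `H̃` in genus `g − 1`, counted twice, is the
value in genus `g`. -/

/-- The TQFT underlying equivariant Gromov–Witten theory of `ℙ¹`: its value on `b`
insertions of `H̃` (and any number of insertions of `1`) in genus `g` is
`2^g φ^{(g−1+b)/2} = 2^g (√φ)^{g−1+b}` if `g−1+b` is even (i.e. `g+b` odd), else `0`. -/
noncomputable def tqftP1 {K : Type*} [CommRing K] (s : K) (g b : ℕ) : K :=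
  if Odd (g + b) then 2 ^ g * s ^ (g + b - 1) else 0

/-- The number of insertions of `H̃` among the basis vectors `(e 0, e 1) = (1, H̃)`. -/
def countH {n : ℕ} (v : Fin n → Fin 2) : ℕ :=
  (Finset.univ.filter fun i => v i = 1).card

lemma countH_snoc {n : ℕ} (v : Fin n → Fin 2) (x : Fin 2) :
    countH (Fin.snoc v x) = countH v + if x = 1 then 1 else 0 := by
  simp only [countH, Finset.card_filter]
  rw [Fin.sum_univ_castSucc]
  simp [Fin.snoc]

lemma sum_antidiagonal_mul_countH_snoc_snoc {K : Type*} [CommRing K] (f : ℕ → K) {n : ℕ}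
    (v : Fin n → Fin 2) :
    ∑ μ : Fin 2, ∑ ν : Fin 2,
        (!![0, 1; 1, 0] : Matrix (Fin 2) (Fin 2) K) μ ν * f (countH (Fin.snoc (Fin.snoc v μ) ν))
      = 2 * f (countH v + 1) := by
  simp only [Fin.sum_univ_two, countH_snoc]
  norm_num
  ring

lemma two_mul_tqftP1_succ {K : Type*} [CommRing K] (s : K) (g b : ℕ) :
    2 * tqftP1 s g (b + 1) = tqftP1 s (g + 1) b := by
  have hsum : g + (b + 1) = g + 1 + b := by ring
  unfold tqftP1
  rw [hsum]
  split_ifs <;> ring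

/-- Genus-reduction gluing identity for the TQFT `ω` with
`ω_{g,n}(1^{⊗a}, H̃^{⊗b}) = 2^g φ^{(g−1+b)/2}` (if `g−1+b` even, else `0`):
for `g ≥ 1`, `Σ_{μ,ν} η^{μν} ω_{g−1,n+2}(v₁,…,vₙ,e_μ,e_ν) = ω_{g,n}(v₁,…,vₙ)`,
where `η^{μν} = [[0,1],[1,0]]`. -/
theorem tqft_glue_nonseparating {K : Type*} [CommRing K] (s : K)
    (g n : ℕ) (hg : 1 ≤ g) (v : Fin n → Fin 2)
    (J : Matrix (Fin 2) (Fin 2) K) (hJ : J = !![0, 1; 1, 0]) :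
    ∑ μ : Fin 2, ∑ ν : Fin 2,
        J μ ν * tqftP1 s (g - 1) (countH (Fin.snoc (Fin.snoc v μ) ν))
      = tqftP1 s g (countH v) := by
  subst hJ
  obtain ⟨g, rfl⟩ := Nat.exists_eq_add_of_le' hg
  rw [sum_antidiagonal_mul_countH_snoc_snoc, Nat.add_sub_cancel, two_mul_tqftP1_succ]
end

section
/- The covariance matrix identity: let P, λ_0,…,λ_m be elements of a field with P ≠ λ_j for all j, set Δ = Σ_{k=0}^m ∏_{j≠k}(P−λ_j). Define the (m+1)×(m+1) matrix C with entries C_{kl} = (1/Δ)·(−∏_{j∉{k,l}}(P−λ_j)) for k≠l and C_{kk} = (1/Δ)·Σ_{m'≠k} ∏_{j∉{k,m'}}(P−λ_j). Then C is the inverse of the conditional Gaussian quadratic form: C·D restricted to the hyperplane Σ T_j = 0 is the identity, where D = diag(P−λ_0,…,P−λ_m); concretely, for all k: Σ_l C_{kl}(P−λ_l) v_l = v_k for every vector v with Σ_j v_j = 0. -/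
/-! Write `dⱼ = P − λⱼ` and `A = ∏_{j≠k} dⱼ`. Multiplying column `l` of `C` by `d_l` completes the
products: off the diagonal `C_{kl} d_l = −A/Δ`, while `C_{kk} d_k = (Δ − A)/Δ`, since
`d_k ∏_{j∉{k,m'}} dⱼ = ∏_{j≠m'} dⱼ` and these sum over `m' ≠ k` to `Δ − A`. Hence
`Σ_l C_{kl} d_l v_l = v_k − (A/Δ) Σ_l v_l = v_k` on the hyperplane. -/

open Finset

section

variable {ι M : Type*} [Fintype ι] [DecidableEq ι]

lemma sum_erase_eq_neg_of_sum_eq_zero [AddCommGroup M] {v : ι → M} (hv : ∑ j, v j = 0) (k : ι) :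
    ∑ l ∈ univ.erase k, v l = -v k := by
  rw [sum_erase_eq_sub (mem_univ k), hv, zero_sub]

variable [CommMonoid M] (d : ι → M)

lemma prod_erase_erase_mul {k l : ι} (hlk : l ≠ k) :
    (∏ j ∈ (univ.erase k).erase l, d j) * d l = ∏ j ∈ univ.erase k, d j :=
  prod_erase_mul _ d (mem_erase.mpr ⟨hlk, mem_univ l⟩)

lemma prod_erase_erase_mul_self {k l : ι} (hlk : l ≠ k) :
    (∏ j ∈ (univ.erase k).erase l, d j) * d k = ∏ j ∈ univ.erase l, d j := by
  rw [erase_right_comm]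
  exact prod_erase_mul _ d (mem_erase.mpr ⟨hlk.symm, mem_univ k⟩)

end

lemma sum_prod_erase_erase_mul {ι R : Type*} [Fintype ι] [DecidableEq ι] [CommRing R]
    (d : ι → R) (k : ι) :
    (∑ l ∈ univ.erase k, ∏ j ∈ (univ.erase k).erase l, d j) * d k
      = ∑ i, ∏ j ∈ univ.erase i, d j - ∏ j ∈ univ.erase k, d j := by
  rw [sum_mul, ← sum_erase_eq_sub (mem_univ k)]
  exact sum_congr rfl fun l hl => prod_erase_erase_mul_self d (ne_of_mem_erase hl)

theorem covariance_matrix_inverse_general {K : Type*} [Field K] (m : ℕ) (P : K)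
    (lam : Fin (m + 1) → K)
    (Δ : K) (hΔdef : Δ = ∑ k, ∏ j ∈ Finset.univ.erase k, (P - lam j)) (hΔ : Δ ≠ 0)
    (C : Fin (m + 1) → Fin (m + 1) → K)
    (hC : ∀ k l, C k l =
      if k = l then
        Δ⁻¹ * ∑ m' ∈ Finset.univ.erase k,
          ∏ j ∈ (Finset.univ.erase k).erase m', (P - lam j)
      else
        Δ⁻¹ * (-(∏ j ∈ (Finset.univ.erase k).erase l, (P - lam j))))
    (v : Fin (m + 1) → K) (hv : ∑ j, v j = 0) (k : Fin (m + 1)) :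
    ∑ l, C k l * (P - lam l) * v l = v k := by
  set A := ∏ j ∈ univ.erase k, (P - lam j)
  have hoff : ∀ l ∈ univ.erase k, C k l * (P - lam l) * v l = -(Δ⁻¹ * A) * v l := by
    intro l hl
    have hlk := ne_of_mem_erase hl
    rw [hC, if_neg hlk.symm]
    linear_combination (-Δ⁻¹ * v l) * prod_erase_erase_mul (fun j => P - lam j) hlk
  have hdiag : C k k * (P - lam k) = 1 - Δ⁻¹ * A := by
    rw [hC, if_pos rfl, mul_assoc, sum_prod_erase_erase_mul (fun j => P - lam j), ← hΔdef,
      mul_sub, inv_mul_cancel₀ hΔ]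
  rw [← add_sum_erase _ _ (mem_univ k), sum_congr rfl hoff, ← mul_sum,
    sum_erase_eq_neg_of_sum_eq_zero hv, hdiag]
  ring

/-- The covariance matrix of the conditional Gaussian distribution on the
hyperplane `Σ Tⱼ = 0` with density `exp(−Σ (P−λⱼ)Tⱼ²/2)`: with
`Δ = Σ_k ∏_{j≠k}(P−λⱼ) ≠ 0` and `C_{kl} = −(1/Δ)∏_{j∉{k,l}}(P−λⱼ)` for `k ≠ l`,
`C_{kk} = (1/Δ)Σ_{m'≠k}∏_{j∉{k,m'}}(P−λⱼ)`, the matrix `C` inverts the quadratic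
form `diag(P−λⱼ)` on the hyperplane: `Σ_l C_{kl}(P−λ_l)v_l = v_k` whenever
`Σ_j v_j = 0`. -/
theorem covariance_matrix_inverse {K : Type*} [Field K] (m : ℕ) (P : K)
    (lam : Fin (m + 1) → K) (hP : ∀ j, P ≠ lam j)
    (Δ : K) (hΔdef : Δ = ∑ k, ∏ j ∈ Finset.univ.erase k, (P - lam j)) (hΔ : Δ ≠ 0)
    (C : Fin (m + 1) → Fin (m + 1) → K)
    (hC : ∀ k l, C k l =
      if k = l then
        Δ⁻¹ * ∑ m' ∈ Finset.univ.erase k,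
          ∏ j ∈ (Finset.univ.erase k).erase m', (P - lam j)
      else
        Δ⁻¹ * (-(∏ j ∈ (Finset.univ.erase k).erase l, (P - lam j))))
    (v : Fin (m + 1) → K) (hv : ∑ j, v j = 0) (k : Fin (m + 1)) :
    ∑ l, C k l * (P - lam l) * v l = v k :=
  covariance_matrix_inverse_general m P lam Δ hΔdef hΔ C hC v hv k
end
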